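/- The limit as d → +∞ of H(d) = ∫_{arccosh(d)}^{∞} d/√(cosh²u − d²) du equals π/2. -/

import Mathlib

/-!
Substituting `u = w + a` with `cosh a = d` and dividing by `d` turns the integrand into
`(√((cosh w + t sinh w)² - 1))⁻¹` with `t = tanh a`, and `t → 1` as `d → ∞`.
At `t = 1` this is `(√(e^{2w} - 1))⁻¹`, which has antiderivative `arctan √(e^{2w} - 1)`
and hence integral `π/2` over `(0, ∞)`; for `t ≥ 1/2` the integrand is at most `√2` times it,
so dominated convergence applies.
-/

open MeasureTheory Set Real Filter Topology

noncomputable def arccosh (x : ℝ) : ℝ := Real.log (x + Real.sqrt (x ^ 2 - 1))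

noncomputable def H (d : ℝ) : ℝ :=
  ∫ u in Set.Ioi (arccosh d), d / Real.sqrt (Real.cosh u ^ 2 - d ^ 2)

theorem arccosh_eq_arcosh : arccosh = Real.arcosh := rfl

theorem Real.tendsto_arcosh_atTop : Tendsto arcosh atTop atTop :=
  tendsto_log_atTop.comp <|
    tendsto_atTop_mono (fun _ => le_add_of_nonneg_right (sqrt_nonneg _)) tendsto_id

theorem Real.tanh_eq_one_sub_exp (x : ℝ) : tanh x = (1 - exp (-2 * x)) / (1 + exp (-2 * x)) := by
  rw [tanh_eq]
  have h : exp (-2 * x) = exp (-x) * exp (-x) := by rw [← exp_add]; ring_nf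
  have h' : exp x * exp (-x) = 1 := by rw [← exp_add]; simp
  rw [h, div_eq_div_iff (by positivity) (by positivity)]
  linear_combination 2 * exp (-x) * h'

theorem Real.tendsto_tanh_atTop : Tendsto tanh atTop (𝓝 1) := by
  have h : Tendsto (fun x : ℝ => exp (-2 * x)) atTop (𝓝 0) :=
    tendsto_exp_atBot.comp (tendsto_id.const_mul_atTop_of_neg (by norm_num))
  have h' := ((tendsto_const_nhds (x := (1 : ℝ))).sub h).div
    ((tendsto_const_nhds (x := (1 : ℝ))).add h) (by norm_num)
  rw [sub_zero, add_zero, div_one] at h'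
  exact h'.congr fun x => (Real.tanh_eq_one_sub_exp x).symm

theorem setIntegral_Ioi_zero_comp_add_right {E : Type*} [NormedAddCommGroup E] [NormedSpace ℝ E]
    (f : ℝ → E) (a : ℝ) : ∫ w in Ioi 0, f (w + a) = ∫ u in Ioi a, f u := by
  rw [← (measurePreserving_add_right volume a).setIntegral_preimage_emb
    (MeasurableEquiv.addRight a).measurableEmbedding f (Ioi a)]
  simp

noncomputable def shiftKernel (t w : ℝ) : ℝ := (√((cosh w + t * sinh w) ^ 2 - 1))⁻¹

theorem cosh_div_sqrt_cosh_add_sq_sub_cosh_sq (a w : ℝ) :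
    cosh a / √(cosh (w + a) ^ 2 - cosh a ^ 2) = shiftKernel (tanh a) w := by
  have ha := (cosh_pos a).ne'
  have h : cosh (w + a) ^ 2 - cosh a ^ 2 = cosh a ^ 2 * ((cosh w + tanh a * sinh w) ^ 2 - 1) := by
    rw [cosh_add, tanh_eq_sinh_div_cosh]
    field_simp
  rw [h, sqrt_mul (sq_nonneg _), sqrt_sq (cosh_pos a).le, shiftKernel, div_mul_cancel_left₀ ha]

theorem H_eq_integral_shiftKernel {d : ℝ} (hd : 1 ≤ d) :
    H d = ∫ w in Ioi 0, shiftKernel (tanh (arcosh d)) w := by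
  rw [H, arccosh_eq_arcosh, ← setIntegral_Ioi_zero_comp_add_right]
  refine setIntegral_congr_fun measurableSet_Ioi fun w _ => ?_
  rw [← cosh_div_sqrt_cosh_add_sq_sub_cosh_sq, cosh_arcosh hd]

theorem shiftKernel_nonneg (t w : ℝ) : 0 ≤ shiftKernel t w :=
  inv_nonneg.2 (sqrt_nonneg _)

theorem sq_cosh_add_sinh_sub_one (w : ℝ) : (cosh w + sinh w) ^ 2 - 1 = exp (2 * w) - 1 := by
  rw [cosh_add_sinh, ← exp_nat_mul]
  norm_num [mul_comm]

theorem shiftKernel_one (w : ℝ) : shiftKernel 1 w = (√(exp (2 * w) - 1))⁻¹ := by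
  rw [shiftKernel, one_mul, sq_cosh_add_sinh_sub_one]

theorem exp_two_mul_sub_one_pos {w : ℝ} (hw : 0 < w) : 0 < exp (2 * w) - 1 := by
  simpa using (one_lt_exp_iff.2 (by linarith : 0 < 2 * w))

theorem shiftKernel_le_sqrt_two_mul_shiftKernel_one {t w : ℝ} (ht : 1 / 2 ≤ t) (hw : 0 < w) :
    shiftKernel t w ≤ √2 * shiftKernel 1 w := by
  have hs := (sinh_pos_iff.2 hw).le
  have hc := (cosh_pos w).le
  have hx := exp_two_mul_sub_one_pos hw
  have hle : (exp (2 * w) - 1) / 2 ≤ (cosh w + t * sinh w) ^ 2 - 1 := by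
    rw [← sq_cosh_add_sinh_sub_one]
    nlinarith [cosh_sq w, mul_nonneg hs hc, mul_nonneg (mul_nonneg hs hs) (sq_nonneg t)]
  calc shiftKernel t w ≤ (√((exp (2 * w) - 1) / 2))⁻¹ :=
        inv_anti₀ (sqrt_pos.2 (by linarith)) (sqrt_le_sqrt hle)
    _ = √2 * shiftKernel 1 w := by
        rw [shiftKernel_one, sqrt_div' _ (by norm_num : (0:ℝ) ≤ 2), inv_div, div_eq_mul_inv]

theorem hasDerivAt_arctan_sqrt_exp_two_mul_sub_one {w : ℝ} (hw : 0 < w) :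
    HasDerivAt (fun x => arctan √(exp (2 * x) - 1)) (shiftKernel 1 w) w := by
  have hx := exp_two_mul_sub_one_pos hw
  have h := (((hasDerivAt_id' w).const_mul 2).exp.sub_const 1).sqrt hx.ne' |>.arctan
  convert h using 1
  rw [shiftKernel_one, sq_sqrt hx.le]
  field_simp
  ring

theorem continuous_arctan_sqrt_exp_two_mul_sub_one :
    Continuous fun x => arctan √(exp (2 * x) - 1) := by
  fun_prop

theorem tendsto_arctan_sqrt_exp_two_mul_sub_one :
    Tendsto (fun x => arctan √(exp (2 * x) - 1)) atTop (𝓝 (π / 2)) := by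
  have h : Tendsto (fun x : ℝ => exp (2 * x) - 1) atTop atTop :=
    tendsto_atTop_add_const_right _ _ (tendsto_exp_atTop.comp (tendsto_id.const_mul_atTop two_pos))
  exact (tendsto_arctan_atTop.mono_right nhdsWithin_le_nhds).comp (tendsto_sqrt_atTop.comp h)

theorem integrableOn_shiftKernel_one : IntegrableOn (shiftKernel 1) (Ioi 0) :=
  integrableOn_Ioi_deriv_of_nonneg continuous_arctan_sqrt_exp_two_mul_sub_one.continuousWithinAt
    (fun _ hw => hasDerivAt_arctan_sqrt_exp_two_mul_sub_one hw)
    (fun w _ => shiftKernel_nonneg 1 w) tendsto_arctan_sqrt_exp_two_mul_sub_one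

theorem integral_shiftKernel_one : ∫ w in Ioi 0, shiftKernel 1 w = π / 2 := by
  rw [integral_Ioi_of_hasDerivAt_of_nonneg
    continuous_arctan_sqrt_exp_two_mul_sub_one.continuousWithinAt
    (fun _ hw => hasDerivAt_arctan_sqrt_exp_two_mul_sub_one hw)
    (fun w _ => shiftKernel_nonneg 1 w) tendsto_arctan_sqrt_exp_two_mul_sub_one]
  simp

theorem continuousAt_shiftKernel_one {w : ℝ} (hw : 0 < w) :
    ContinuousAt (fun t => shiftKernel t w) 1 := by
  have h : √((cosh w + 1 * sinh w) ^ 2 - 1) ≠ 0 := by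
    rw [one_mul, sq_cosh_add_sinh_sub_one]
    exact (sqrt_pos.2 (exp_two_mul_sub_one_pos hw)).ne'
  unfold shiftKernel
  fun_prop (disch := exact h)

theorem tendsto_integral_shiftKernel :
    Tendsto (fun t => ∫ w in Ioi 0, shiftKernel t w) (𝓝 1) (𝓝 (π / 2)) := by
  rw [← integral_shiftKernel_one]
  refine tendsto_integral_filter_of_dominated_convergence (fun w => √2 * shiftKernel 1 w)
    (Eventually.of_forall fun t => ?_) ?_ (integrableOn_shiftKernel_one.const_mul _) ?_
  · unfold shiftKernel; fun_prop
  · filter_upwards [eventually_ge_nhds (by norm_num : (1 / 2 : ℝ) < 1)] with t ht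
    filter_upwards [ae_restrict_mem measurableSet_Ioi] with w hw
    rw [norm_of_nonneg (shiftKernel_nonneg t w)]
    exact shiftKernel_le_sqrt_two_mul_shiftKernel_one ht hw
  · filter_upwards [ae_restrict_mem measurableSet_Ioi] with w hw
    exact continuousAt_shiftKernel_one hw

theorem stmt_2 : Tendsto H atTop (𝓝 (Real.pi / 2)) := by
  refine (tendsto_integral_shiftKernel.comp
    (tendsto_tanh_atTop.comp tendsto_arcosh_atTop)).congr' ?_
  filter_upwards [eventually_ge_atTop 1] with d hd
  exact (H_eq_integral_shiftKernel hd).symm
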